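/- For a finite group G and a prime p, the p-primary component of the Schur multiplier M(G) is isomorphic to a subgroup of the Schur multiplier M(P) of a Sylow p-subgroup P of G. -/

import Mathlib

open groupCohomology

/-- The Schur multiplier of a (finite) group `G`, realized as the second cohomology group
`H²(G, ℚ/ℤ)` with trivial action (which for finite `G` is isomorphic to `H₂(G,ℤ)`). -/
noncomputable abbrev SchurMultiplier (G : Type) [Group G] : Type :=
  H2 (Rep.trivial ℤ G (AddCircle (1 : ℚ)))

/-! Restriction `M(G) → M(P)` is injective on the `p`-primary part. If a 2-cocycle `F` of `G`
with values in the trivial module restricts to a coboundary `δw` on a subgroup `H` of finite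
index, then summing the identity `F = δw` transported along a system of left coset
representatives exhibits `[G : H] • F` as a coboundary (the cochain-level form of
`cor ∘ res = [G : H]`). So the kernel of restriction is killed by `[G : P]`, which is prime
to `p`. -/

open CategoryTheory

theorem cocycle_eq_of_mul_eq_mul {G A : Type*} [Group G] [AddCommGroup A] {F : G × G → A}
    (hF : ∀ g h j : G, F (g * h, j) + F (g, h) = F (h, j) + F (g, h * j))
    {g₁ g₂ t t' t'' h₁ h₂ : G} (e₂ : g₂ * t = t' * h₂) (e₁ : g₁ * t' = t'' * h₁) :
    F (g₁, g₂) = F (h₁, h₂) + (F (g₂, t) - F (t', h₂)) - (F (g₁ * g₂, t) - F (t'', h₁ * h₂))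
      + (F (g₁, t') - F (t'', h₁)) := by
  have c₁ := hF t'' h₁ h₂
  have c₂ := hF g₁ t' h₂
  have c₃ := hF g₁ g₂ t
  rw [← e₁] at c₁
  rw [← e₂] at c₂
  linear_combination (norm := abel) c₃ + c₁ - c₂

namespace Subgroup

variable {G A : Type*} [Group G] [AddCommGroup A] (H : Subgroup G)

noncomputable def cosetFactor (g : G) (c : G ⧸ H) : H :=
  ⟨(g • c).out⁻¹ * (g * c.out), QuotientGroup.eq.1 <| by
    rw [QuotientGroup.out_eq', ← smul_eq_mul, MulAction.Quotient.mk_smul_out]⟩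

theorem mul_out_eq_out_mul_cosetFactor (g : G) (c : G ⧸ H) :
    g * c.out = (g • c).out * H.cosetFactor g c := by
  simp [cosetFactor]

theorem cosetFactor_mul (g₁ g₂ : G) (c : G ⧸ H) :
    H.cosetFactor (g₁ * g₂) c = H.cosetFactor g₁ (g₂ • c) * H.cosetFactor g₂ c := by
  ext
  simp [cosetFactor, mul_smul, mul_assoc]

noncomputable def transferTerm (F : G × G → A) (w : H → A) (g : G) (c : G ⧸ H) : A :=
  w (H.cosetFactor g c) + (F (g, c.out) - F ((g • c).out, H.cosetFactor g c))

noncomputable def transferCochain [Fintype (G ⧸ H)] (F : G × G → A) (w : H → A) (g : G) : A :=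
  ∑ c : G ⧸ H, H.transferTerm F w g c

variable {H} {F : G × G → A} {w : H → A}

theorem cocycle_eq_transferTerm
    (hF : ∀ g h j : G, F (g * h, j) + F (g, h) = F (h, j) + F (g, h * j))
    (hw : ∀ a b : H, F (a, b) = w b - w (a * b) + w a) (g₁ g₂ : G) (c : G ⧸ H) :
    F (g₁, g₂) = H.transferTerm F w g₂ c - H.transferTerm F w (g₁ * g₂) c
      + H.transferTerm F w g₁ (g₂ • c) := by
  rw [cocycle_eq_of_mul_eq_mul hF (H.mul_out_eq_out_mul_cosetFactor g₂ c)
    (H.mul_out_eq_out_mul_cosetFactor g₁ (g₂ • c))]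
  simp only [transferTerm, H.cosetFactor_mul, mul_smul, ← coe_mul, hw]
  abel

theorem card_nsmul_eq_transferCochain [Fintype (G ⧸ H)]
    (hF : ∀ g h j : G, F (g * h, j) + F (g, h) = F (h, j) + F (g, h * j))
    (hw : ∀ a b : H, F (a, b) = w b - w (a * b) + w a) (g₁ g₂ : G) :
    Fintype.card (G ⧸ H) • F (g₁, g₂) = H.transferCochain F w g₂
      - H.transferCochain F w (g₁ * g₂) + H.transferCochain F w g₁ := by
  rw [← Finset.card_univ, ← Finset.sum_const, transferCochain, transferCochain, transferCochain,
    ← Fintype.sum_bijective _ (MulAction.bijective g₂) (fun c => H.transferTerm F w g₁ (g₂ • c))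
      _ fun _ => rfl,
    ← Finset.sum_sub_distrib, ← Finset.sum_add_distrib]
  exact Finset.sum_congr rfl fun c _ => cocycle_eq_transferTerm hF hw g₁ g₂ c

end Subgroup

namespace groupCohomology

universe u

variable {k G A : Type u} [CommRing k] [Group G] [AddCommGroup A] [Module k A]
  (H : Subgroup G) [H.FiniteIndex]

theorem index_nsmul_mem_coboundaries₂_of_mapCocycles₂_mem (F : cocycles₂ (Rep.trivial k G A))
    (hF : ⇑(mapCocycles₂ H.subtype (𝟙 _) F) ∈
      coboundaries₂ (Rep.res H.subtype (Rep.trivial k G A))) :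
    ⇑(H.index • F) ∈ coboundaries₂ (Rep.trivial k G A) := by
  obtain ⟨w, hw⟩ := hF
  have := Fintype.ofFinite (G ⧸ H)
  have hwH (a b : H) : F (a, b) = w b - w (a * b) + w a := (congrFun hw (a, b)).symm
  have hF_cocycle : ∀ g h j : G, F (g * h, j) + F (g, h) = F (h, j) + F (g, h * j) := by
    simpa using (mem_cocycles₂_iff F).1 F.2
  refine ⟨H.transferCochain F w, funext fun g => ?_⟩
  rw [H.index_eq_card, Nat.card_eq_fintype_card]
  exact (Subgroup.card_nsmul_eq_transferCochain hF_cocycle hwH g.1 g.2).symm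

theorem index_nsmul_eq_zero_of_map_eq_zero (x : H2 (Rep.trivial k G A))
    (hx : map H.subtype (𝟙 _) 2 x = 0) : H.index • x = 0 := by
  induction x using H2_induction_on with | h F =>
  rw [← map_nsmul, H2π_eq_zero_iff]
  refine index_nsmul_mem_coboundaries₂_of_mapCocycles₂_mem H F ?_
  rw [← H2π_eq_zero_iff, ← H2π_comp_map_apply, hx]

end groupCohomology

theorem AddCommGroup.eq_zero_of_mem_primaryComponent_of_nsmul_eq_zero {A : Type*}
    [AddCommGroup A] {p n : ℕ} (hp : p.Prime) {a : A} (ha : a ∈ primaryComponent A p)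
    (hn : ¬ p ∣ n) (hna : n • a = 0) : a = 0 := by
  obtain ⟨k, hk⟩ := ha
  have hcop : (p ^ k).Coprime n := ((hp.coprime_iff_not_dvd).2 hn).pow_left k
  rw [← AddMonoid.addOrderOf_eq_one_iff, ← Nat.dvd_one, ← hcop.gcd_eq_one]
  exact Nat.dvd_gcd (addOrderOf_dvd_of_nsmul_eq_zero hk) (addOrderOf_dvd_of_nsmul_eq_zero hna)

/-- For a finite group `G` and a prime `p`, the `p`-primary component of the Schur
multiplier `M(G)` is isomorphic to a subgroup of the Schur multiplier `M(P)` of a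
Sylow `p`-subgroup `P` of `G`. -/
theorem schurMultiplier_primaryComponent_embeds_in_sylow
    (G : Type) [Group G] [Finite G] (p : ℕ) [Fact p.Prime] (P : Sylow p G) :
    ∃ f : AddCommGroup.primaryComponent (SchurMultiplier G) p →+ SchurMultiplier P,
      Function.Injective f := by
  let res : SchurMultiplier G →+ SchurMultiplier P :=
    (map (P : Subgroup G).subtype (𝟙 _) 2).hom.toAddMonoidHom
  refine ⟨res.comp (AddSubgroup.subtype _), (injective_iff_map_eq_zero _).2 ?_⟩
  rintro ⟨x, hx⟩ hres
  exact Subtype.ext <| AddCommGroup.eq_zero_of_mem_primaryComponent_of_nsmul_eq_zero Fact.out hx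
    P.not_dvd_index (index_nsmul_eq_zero_of_map_eq_zero _ x hres)
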